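/- Critical-point quadratic bound (Lemma 2.2). Let ξ : ℝ^{D×D} → ℝ be smooth (C^∞), let t ≥ 0 and q ∈ Q_2. Assume: (i) ψ : Q_2 → ℝ is such that for every q̃ ∈ Q_2 there is an element ∇ψ(q̃) ∈ Q_{∞,≤1} with |ψ(q̃′) − ψ(q̃) − ⟨q̃′ − q̃, ∇ψ(q̃)⟩_{L²}| ≤ 8 |q̃′ − q̃|²_{L²} for all q̃′ ∈ Q_2; (ii) for every p ∈ Q_{∞,≤1} the path s ↦ ∇ξ(p(s)) belongs to Q_∞. Define 𝒫(p) = ψ(q + t∇ξ(p)) − t ∫₀¹ θ(p(u)) du for p ∈ Q_{∞,≤1}. Then there is a constant C > 0, depending only on ξ and t, such that whenever p⋆ ∈ Q_{∞,≤1} satisfies p⋆ = ∇ψ(q + t∇ξ(p⋆)), one has |𝒫(p) − 𝒫(p⋆)| ≤ C |p − p⋆|²_{L^∞} for every p ∈ Q_{∞,≤1}. -/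

import Mathlib

noncomputable section

open MeasureTheory Set Filter Topology RealInnerProductSpace

/-- `D×D` real matrices with the Frobenius (Euclidean) norm. -/
abbrev Mat (D : ℕ) : Type := EuclideanSpace ℝ (Fin D × Fin D)

/-- symmetric positive semidefinite matrices -/
def Mat.PSD {D : ℕ} (a : Mat D) : Prop :=
  (∀ i j : Fin D, a (i, j) = a (j, i)) ∧
    ∀ v : Fin D → ℝ, 0 ≤ ∑ i, ∑ j, v i * a (i, j) * v j

/-- the unit interval `[0,1)` as a type -/
abbrev UI : Type := Set.Ico (0 : ℝ) 1

abbrev SPath (D : ℕ) : Type := UI → Mat D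

/-- Lebesgue measure on `[0,1)` -/
instance : MeasureSpace UI := ⟨(volume : Measure ℝ).comap Subtype.val⟩

/-- càdlàg increasing `S^D_+`-valued path, i.e. a member of `Q` -/
def IsQ {D : ℕ} (p : SPath D) : Prop :=
  (∀ s, Mat.PSD (p s)) ∧
  (∀ s t : UI, s ≤ t → Mat.PSD (p t - p s)) ∧
  (∀ s : UI, ContinuousWithinAt p (Set.Ici s) s) ∧
  (∀ s : UI, (0 : ℝ) < (s : ℝ) →
    ∃ L : Mat D, Tendsto p (nhdsWithin s (Set.Iio s)) (nhds L))

/-- `L^∞` norm (sup norm on `[0,1)`) -/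
def supN {D : ℕ} (p : SPath D) : ℝ := sSup (Set.range fun s => ‖p s‖)

/-- bounded path, i.e. member of `L^∞` -/
def Bdd {D : ℕ} (p : SPath D) : Prop := BddAbove (Set.range fun s => ‖p s‖)

/-- `L¹` norm -/
def L1N {D : ℕ} (p : SPath D) : ℝ := ∫ s, ‖p s‖

/-- `L²` norm -/
def L2N {D : ℕ} (p : SPath D) : ℝ := Real.sqrt (∫ s, ‖p s‖ ^ 2)

/-- `L²` inner product -/
def L2I {D : ℕ} (p q : SPath D) : ℝ := ∫ s, ⟪p s, q s⟫

def Qinf (D : ℕ) : Set (SPath D) := {p | IsQ p ∧ Bdd p}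

def Qle1 (D : ℕ) : Set (SPath D) := {p | IsQ p ∧ ∀ s, ‖p s‖ ≤ 1}

def Q1 (D : ℕ) : Set (SPath D) := {p | IsQ p ∧ Integrable fun s => ‖p s‖}

def Q2 (D : ℕ) : Set (SPath D) := {p | IsQ p ∧ Integrable fun s => ‖p s‖ ^ 2}

/-- the path `s ↦ ∇ξ(p(s))` -/
def gradPath {D : ℕ} (ξ : Mat D → ℝ) (p : SPath D) : SPath D := fun s => gradient ξ (p s)

/-- `θ(a) = a·∇ξ(a) − ξ(a)` -/
def theta {D : ℕ} (ξ : Mat D → ℝ) (a : Mat D) : ℝ := ⟪a, gradient ξ a⟫ - ξ a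

/-- `∇ξ` is `L`-Lipschitz on the unit ball `B` -/
def LipOnB {D : ℕ} (ξ : Mat D → ℝ) (L : ℝ) : Prop :=
  ∀ a b : Mat D, ‖a‖ ≤ 1 → ‖b‖ ≤ 1 → ‖gradient ξ a - gradient ξ b‖ ≤ L * ‖a - b‖

/-- The functional `𝒫(p) = ψ(q + t∇ξ(p)) − t ∫₀¹ θ(p(u)) du`. -/
def scrP {D : ℕ} (ξ : Mat D → ℝ) (ψ : SPath D → ℝ) (t : ℝ) (q p : SPath D) : ℝ :=
  ψ (q + t • gradPath ξ p) - t * ∫ u, theta ξ (p u)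

/-! ### Auxiliary lemmas -/

instance : IsProbabilityMeasure (volume : Measure UI) := by
  constructor
  show ((volume : Measure ℝ).comap Subtype.val) Set.univ = 1
  rw [(MeasurableEmbedding.subtype_coe measurableSet_Ico).comap_apply,
    Subtype.coe_image_univ, Real.volume_Ico]
  norm_num

lemma lowerSet_measurable {T : Set ℝ} (h : IsLowerSet T) : MeasurableSet T := by
  rcases T.eq_empty_or_nonempty with rfl | hne
  · exact MeasurableSet.empty
  by_cases hb : BddAbove T
  · set b := sSup T with hbdef
    have h1 : Set.Iio b ⊆ T := fun x hx => by
      obtain ⟨y, hy, hxy⟩ := exists_lt_of_lt_csSup hne hx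
      exact h hxy.le hy
    have h2 : T ⊆ Set.Iic b := fun x hx => le_csSup hb hx
    have : T = Set.Iio b ∪ (T ∩ {b}) := by
      apply Set.Subset.antisymm
      · intro x hx
        rcases eq_or_lt_of_le (show x ≤ b from h2 hx) with rfl | hlt
        · exact Or.inr ⟨hx, rfl⟩
        · exact Or.inl hlt
      · rintro x (hx | ⟨hx, _⟩)
        · exact h1 hx
        · exact hx
    rw [this]
    exact measurableSet_Iio.union
      (Set.Subsingleton.measurableSet (fun x hx y hy => hx.2.trans hy.2.symm))
  · have : T = Set.univ := by
      apply Set.eq_univ_of_forall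
      intro x
      obtain ⟨y, hy, hxy⟩ := not_bddAbove_iff.mp hb x
      exact h hxy.le hy
    rw [this]; exact MeasurableSet.univ

lemma monotone_measurable {g : UI → ℝ} (hg : Monotone g) : Measurable g := by
  apply measurable_of_Iio
  intro a
  have : g ⁻¹' Set.Iio a
      = Subtype.val ⁻¹' (Set.Iio (0:ℝ) ∪ Subtype.val '' (g ⁻¹' Set.Iio a)) := by
    ext s
    simp only [Set.mem_preimage, Set.mem_union, Set.mem_Iio, Set.mem_image]
    constructor
    · intro hs; exact Or.inr ⟨s, hs, rfl⟩
    · rintro (hs | ⟨y, hy, hval⟩)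
      · exact absurd hs (not_lt.mpr s.2.1)
      · rwa [Subtype.val_injective hval] at hy
  rw [this]
  apply MeasurableSet.preimage _ measurable_subtype_coe
  apply lowerSet_measurable
  rintro x y hyx (hx | ⟨s, hs, rfl⟩)
  · exact Or.inl (lt_of_le_of_lt hyx hx)
  · rcases lt_or_ge y 0 with hy0 | hy0
    · exact Or.inl hy0
    · refine Or.inr ⟨⟨y, hy0, lt_of_le_of_lt hyx s.2.2⟩, ?_, rfl⟩
      exact lt_of_le_of_lt (hg (Subtype.mk_le_mk.mpr hyx)) hs

def qf {D : ℕ} (v : Fin D → ℝ) (a : Mat D) : ℝ := ∑ i, ∑ j, v i * a (i, j) * v j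

lemma qf_sub {D : ℕ} (v : Fin D → ℝ) (a b : Mat D) : qf v (a - b) = qf v a - qf v b := by
  simp only [qf, PiLp.sub_apply, mul_sub, sub_mul, Finset.sum_sub_distrib]

lemma qf_cross {D : ℕ} (i j : Fin D) (a : Mat D) :
    qf (Pi.single i 1 + Pi.single j 1) a - qf (Pi.single i 1) a - qf (Pi.single j 1) a
      = a (i, j) + a (j, i) := by
  simp only [qf, Pi.add_apply, Pi.single_apply, add_mul, mul_add, ite_mul, mul_ite,
    one_mul, mul_one, zero_mul, mul_zero, Finset.sum_add_distrib, Finset.sum_ite_eq',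
    Finset.mem_univ, if_true]
  ring

lemma IsQ.measurable {D : ℕ} {p : SPath D} (hp : IsQ p) : Measurable p := by
  have hqf : ∀ v : Fin D → ℝ, Measurable fun s => qf v (p s) := by
    intro v
    apply monotone_measurable
    intro s t hst
    have := (hp.2.1 s t hst).2 v
    have h2 : qf v (p t - p s) = qf v (p t) - qf v (p s) := qf_sub v _ _
    unfold qf at h2 ⊢
    linarith [this, h2]
  have hcoord : ∀ ij : Fin D × Fin D, Measurable fun s => p s ij := by
    rintro ⟨i, j⟩
    have : (fun s => p s (i, j)) = fun s =>
        (qf (Pi.single i 1 + Pi.single j 1) (p s) - qf (Pi.single i 1) (p s)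
          - qf (Pi.single j 1) (p s)) / 2 := by
      funext s
      rw [qf_cross, (hp.1 s).1 j i]
      ring
    rw [this]
    exact (((hqf _).sub (hqf _)).sub (hqf _)).div_const 2
  have : Measurable fun s => (MeasurableEquiv.toLp 2 ((Fin D × Fin D) → ℝ)).symm (p s) :=
    measurable_pi_lambda _ fun ij => by exact hcoord ij
  have h2 := (MeasurableEquiv.toLp 2 ((Fin D × Fin D) → ℝ)).measurable.comp this
  exact h2

lemma gradient_contDiff {D : ℕ} {ξ : Mat D → ℝ} (hξ : ContDiff ℝ (⊤ : ℕ∞) ξ) :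
    ContDiff ℝ (⊤ : ℕ∞) (gradient ξ) := by
  have h1 : ContDiff ℝ (⊤ : ℕ∞) (fderiv ℝ ξ) := hξ.fderiv_right (by simp)
  have h2 : ContDiff ℝ (⊤ : ℕ∞) (⇑(InnerProductSpace.toDual ℝ (Mat D)).symm) :=
    (InnerProductSpace.toDual ℝ (Mat D)).symm.contDiff
  exact h2.comp h1

lemma exists_lip {D : ℕ} {ξ : Mat D → ℝ} (hξ : ContDiff ℝ (⊤ : ℕ∞) ξ) :
    ∃ L : ℝ, 0 ≤ L ∧ LipOnB ξ L := by
  have hg := gradient_contDiff hξ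
  have hfd : Continuous (fderiv ℝ (gradient ξ)) := (hg.fderiv_right (m := (⊤ : ℕ∞)) (by simp)).continuous
  obtain ⟨C, hC⟩ := (isCompact_closedBall (0 : Mat D) 1).exists_bound_of_continuousOn
    (hfd.continuousOn (s := Metric.closedBall 0 1))
  set K : NNReal := ⟨max C 0, le_max_right _ _⟩ with hK
  refine ⟨K, K.2, ?_⟩
  have hlip : LipschitzOnWith K (gradient ξ) (Metric.closedBall (0 : Mat D) 1) := by
    apply Convex.lipschitzOnWith_of_nnnorm_fderiv_le
      (fun x _ => (hg.differentiable (by simp)).differentiableAt)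
      (fun x hx => ?_) (convex_closedBall _ _)
    have h1 : ‖fderiv ℝ (gradient ξ) x‖ ≤ (K : ℝ) := (hC x hx).trans (le_max_left C 0)
    rwa [← NNReal.coe_le_coe, coe_nnnorm]
  intro a b ha hb
  have := hlip.dist_le_mul a (by simpa [Metric.mem_closedBall, dist_eq_norm] using ha)
    b (by simpa [Metric.mem_closedBall, dist_eq_norm] using hb)
  simpa [dist_eq_norm] using this

lemma exists_ball_bound {D : ℕ} {ξ : Mat D → ℝ} (hξ : ContDiff ℝ (⊤ : ℕ∞) ξ) :
    ∃ M : ℝ, 0 ≤ M ∧ ∀ a : Mat D, ‖a‖ ≤ 1 → ‖gradient ξ a‖ ≤ M ∧ |ξ a| ≤ M := by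
  obtain ⟨M₁, hM₁⟩ := (isCompact_closedBall (0 : Mat D) 1).exists_bound_of_continuousOn
    ((gradient_contDiff hξ).continuous.continuousOn)
  obtain ⟨M₂, hM₂⟩ := (isCompact_closedBall (0 : Mat D) 1).exists_bound_of_continuousOn
    ((hξ.continuous (E := Mat D)).continuousOn)
  refine ⟨max (max M₁ M₂) 0, le_max_right _ _, fun a ha => ?_⟩
  have ha' : a ∈ Metric.closedBall (0 : Mat D) 1 := by
    simpa [Metric.mem_closedBall, dist_eq_norm] using ha
  constructor
  · exact (hM₁ a ha').trans ((le_max_left _ _).trans (le_max_left _ _))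
  · exact (hM₂ a ha').trans ((le_max_right _ _).trans (le_max_left _ _))

lemma taylor_bound {D : ℕ} {ξ : Mat D → ℝ} (hξ : ContDiff ℝ (⊤ : ℕ∞) ξ) {L : ℝ}
    (hL0 : 0 ≤ L) (hL : LipOnB ξ L) {a b : Mat D} (ha : ‖a‖ ≤ 1) (hb : ‖b‖ ≤ 1) :
    |ξ b - ξ a - ⟪gradient ξ a, b - a⟫| ≤ L * ‖b - a‖ ^ 2 := by
  set F : Mat D → ℝ := fun x => ξ x - ⟪gradient ξ a, x⟫ with hF
  set f' : Mat D → (Mat D →L[ℝ] ℝ) := fun x =>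
    (InnerProductSpace.toDual ℝ (Mat D)) (gradient ξ x - gradient ξ a) with hf'
  have hseg : segment ℝ a b ⊆ Metric.closedBall (0 : Mat D) 1 := by
    apply (convex_closedBall _ _).segment_subset <;>
      simpa [Metric.mem_closedBall, dist_eq_norm]
  have hderiv : ∀ x ∈ segment ℝ a b, HasFDerivWithinAt F (f' x) (segment ℝ a b) x := by
    intro x hx
    have h1 : HasFDerivAt ξ ((InnerProductSpace.toDual ℝ (Mat D)) (gradient ξ x)) x :=
      hasGradientAt_iff_hasFDerivAt.mp (hξ.differentiable (by simp) x).hasGradientAt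
    have h2 : HasFDerivAt (fun y => ⟪gradient ξ a, y⟫)
        ((InnerProductSpace.toDual ℝ (Mat D)) (gradient ξ a)) x := by
      have heq : (fun y : Mat D => ⟪gradient ξ a, y⟫)
          = ⇑((InnerProductSpace.toDual ℝ (Mat D)) (gradient ξ a)) := by
        funext y; simp [InnerProductSpace.toDual_apply_apply]
      rw [heq]
      exact ((InnerProductSpace.toDual ℝ (Mat D)) (gradient ξ a)).hasFDerivAt
    have := (h1.sub h2).hasFDerivWithinAt (s := segment ℝ a b)
    simp only [hf', map_sub]; exact this
  have hbound : ∀ x ∈ segment ℝ a b, ‖f' x‖ ≤ L * ‖b - a‖ := by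
    intro x hx
    have hx1 : ‖x‖ ≤ 1 := by
      have := hseg hx; simpa [Metric.mem_closedBall, dist_eq_norm] using this
    have h1 : ‖f' x‖ = ‖gradient ξ x - gradient ξ a‖ :=
      LinearIsometryEquiv.norm_map _ _
    have h2 : ‖gradient ξ x - gradient ξ a‖ ≤ L * ‖x - a‖ := hL x a hx1 ha
    have h3 : ‖x - a‖ ≤ ‖b - a‖ := by
      obtain ⟨u, v, hu, hv, huv, rfl⟩ := hx
      have hu' : u = 1 - v := by linarith
      have heq : u • a + v • b - a = v • (b - a) := by rw [hu']; module
      rw [heq, norm_smul]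
      simp only [Real.norm_eq_abs, abs_of_nonneg hv]
      nlinarith [norm_nonneg (b - a)]
    calc ‖f' x‖ = ‖gradient ξ x - gradient ξ a‖ := h1
      _ ≤ L * ‖x - a‖ := h2
      _ ≤ L * ‖b - a‖ := by nlinarith
  have key := (convex_segment a b).norm_image_sub_le_of_norm_hasFDerivWithin_le
    hderiv hbound (left_mem_segment ℝ a b) (right_mem_segment ℝ a b)
  have hFba : F b - F a = ξ b - ξ a - ⟪gradient ξ a, b - a⟫ := by
    simp [hF, inner_sub_right]; ring
  rw [← hFba]
  calc |F b - F a| = ‖F b - F a‖ := (Real.norm_eq_abs _).symm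
    _ ≤ L * ‖b - a‖ * ‖b - a‖ := key
    _ = L * ‖b - a‖ ^ 2 := by ring

lemma Mat.PSD.add' {D : ℕ} {a b : Mat D} (ha : Mat.PSD a) (hb : Mat.PSD b) :
    Mat.PSD (a + b) := by
  constructor
  · intro i j
    simp only [PiLp.add_apply, ha.1 i j, hb.1 i j]
  · intro v
    have h1 := ha.2 v
    have h2 := hb.2 v
    have : ∑ i, ∑ j, v i * (a + b) (i, j) * v j
        = (∑ i, ∑ j, v i * a (i, j) * v j) + ∑ i, ∑ j, v i * b (i, j) * v j := by
      simp only [PiLp.add_apply, mul_add, add_mul, Finset.sum_add_distrib]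
    rw [this]; linarith

lemma Mat.PSD.smul' {D : ℕ} {a : Mat D} {t : ℝ} (ht : 0 ≤ t) (ha : Mat.PSD a) :
    Mat.PSD (t • a) := by
  constructor
  · intro i j
    simp only [PiLp.smul_apply, smul_eq_mul, ha.1 i j]
  · intro v
    have h1 := ha.2 v
    have : ∑ i, ∑ j, v i * (t • a) (i, j) * v j
        = t * ∑ i, ∑ j, v i * a (i, j) * v j := by
      simp only [PiLp.smul_apply, smul_eq_mul, Finset.mul_sum]
      congr 1; funext i; congr 1; funext j; ring
    rw [this]
    exact mul_nonneg ht h1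

lemma IsQ.add_smul' {D : ℕ} {q g : SPath D} (hq : IsQ q) (hg : IsQ g) {t : ℝ} (ht : 0 ≤ t) :
    IsQ (q + t • g) := by
  refine ⟨fun s => ?_, fun s u hsu => ?_, fun s => ?_, fun s hs => ?_⟩
  · have : (q + t • g) s = q s + t • g s := rfl
    rw [this]
    exact (hq.1 s).add' ((hg.1 s).smul' ht)
  · have : (q + t • g) u - (q + t • g) s = (q u - q s) + t • (g u - g s) := by
      show (q u + t • g u) - (q s + t • g s) = _
      module
    rw [this]
    exact (hq.2.1 s u hsu).add' ((hg.2.1 s u hsu).smul' ht)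
  · exact (hq.2.2.1 s).add ((hg.2.2.1 s).const_smul t)
  · obtain ⟨Lq, hLq⟩ := hq.2.2.2 s hs
    obtain ⟨Lg, hLg⟩ := hg.2.2.2 s hs
    exact ⟨Lq + t • Lg, hLq.add (hLg.const_smul t)⟩

lemma integrable_of_bound {f : UI → ℝ} (hf : AEStronglyMeasurable f volume) {c : ℝ}
    (hc : ∀ s, |f s| ≤ c) : Integrable f :=
  Integrable.mono' (integrable_const c) hf (ae_of_all _ fun s => by simpa using hc s)

lemma integral_le_of_bound {f : UI → ℝ} (hf : Integrable f) {c : ℝ}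
    (hc : ∀ s, f s ≤ c) : ∫ s, f s ≤ c := by
  calc ∫ s, f s ≤ ∫ _s, c := integral_mono hf (integrable_const c) hc
    _ = c := by simp

lemma mem_Q2_add_smul {D : ℕ} {q g : SPath D} (hq : q ∈ Q2 D) (hg : IsQ g) {M : ℝ}
    (hM : ∀ s, ‖g s‖ ≤ M) {t : ℝ} (ht : 0 ≤ t) : q + t • g ∈ Q2 D := by
  have hQ : IsQ (q + t • g) := hq.1.add_smul' hg ht
  refine ⟨hQ, ?_⟩
  have hmeas : Measurable (q + t • g) := hQ.measurable
  apply Integrable.mono' ((hq.2.const_mul 2).add (integrable_const (2 * (t * M) ^ 2)))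
    ((hmeas.norm.pow_const 2).aestronglyMeasurable)
  apply ae_of_all
  intro s
  have h1 : ‖(q + t • g) s‖ ≤ ‖q s‖ + t * M := by
    have : (q + t • g) s = q s + t • g s := rfl
    rw [this]
    calc ‖q s + t • g s‖ ≤ ‖q s‖ + ‖t • g s‖ := norm_add_le _ _
      _ ≤ ‖q s‖ + t * M := by
          rw [norm_smul, Real.norm_eq_abs, abs_of_nonneg ht]
          have := hM s
          nlinarith [norm_nonneg (g s)]
  have h0 : (0:ℝ) ≤ ‖(q + t • g) s‖ := norm_nonneg _
  have h2 : (0:ℝ) ≤ ‖q s‖ := norm_nonneg _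
  have h3 : (0:ℝ) ≤ t * M := le_trans (norm_nonneg (g ⟨0, by norm_num⟩)) (hM _) |>.trans
    (le_refl M) |> fun hM0 => mul_nonneg ht hM0
  have h1' : ‖q s + (t • g) s‖ ≤ ‖q s‖ + t * M := h1
  have key : ‖q s + (t • g) s‖ ^ 2 ≤ 2 * ‖q s‖ ^ 2 + 2 * (t * M) ^ 2 := by
    nlinarith [sq_nonneg (‖q s‖ - t * M), norm_nonneg (q s + (t • g) s)]
  simpa [Pi.add_apply, abs_of_nonneg (sq_nonneg ‖q s + (t • g) s‖)] using key

set_option maxHeartbeats 2000000 in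
/-- Critical-point quadratic bound (Lemma 2.2): if `p⋆ ∈ Q_{∞,≤1}` is a critical point, i.e. a
solution of the fixed point equation `p⋆ = ∇ψ(q + t∇ξ(p⋆))`, then `𝒫` varies at most
quadratically around `p⋆` (in the `L^∞` norm), with a constant depending only on `ξ` and `t`. -/
theorem critical_point_quadratic_bound
    {D : ℕ} (hD : 1 ≤ D) (ξ : Mat D → ℝ) (hξ : ContDiff ℝ (⊤ : ℕ∞) ξ)
    (hgp : ∀ p ∈ Qle1 D, gradPath ξ p ∈ Qinf D)
    (t : ℝ) (ht : 0 ≤ t) :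
    ∃ C > 0, ∀ q ∈ Q2 D, ∀ ψ : SPath D → ℝ, ∀ Dψ : SPath D → SPath D,
      -- (i)  ψ has an `L²`-gradient `∇ψ(q̃) ∈ Q_{∞,≤1}` at every `q̃ ∈ Q₂`, with a quadratic
      --      Fréchet remainder bound
      (∀ qt ∈ Q2 D, Dψ qt ∈ Qle1 D ∧
        ∀ qt' ∈ Q2 D, |ψ qt' - ψ qt - L2I (qt' - qt) (Dψ qt)| ≤ 8 * L2N (qt' - qt) ^ 2) →
      ∀ pstar ∈ Qle1 D, pstar = Dψ (q + t • gradPath ξ pstar) →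
        ∀ p ∈ Qle1 D,
          |scrP ξ ψ t q p - scrP ξ ψ t q pstar| ≤ C * supN (p - pstar) ^ 2 := by
  obtain ⟨L, hL0, hL⟩ := exists_lip hξ
  obtain ⟨M, hM0, hM⟩ := exists_ball_bound hξ
  refine ⟨8 * t ^ 2 * L ^ 2 + 2 * t * L + 1, by positivity, ?_⟩
  intro q hq ψ Dψ hψ pstar hpstar hfix p hp
  have hpQ : IsQ p := hp.1
  have hpsQ : IsQ pstar := hpstar.1
  have hp1 : ∀ s, ‖p s‖ ≤ 1 := hp.2
  have hps1 : ∀ s, ‖pstar s‖ ≤ 1 := hpstar.2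
  have hgQ : IsQ (gradPath ξ p) := (hgp p hp).1
  have hgsQ : IsQ (gradPath ξ pstar) := (hgp pstar hpstar).1
  have hpm := hpQ.measurable
  have hpsm := hpsQ.measurable
  have hgb : ∀ s, ‖gradPath ξ p s‖ ≤ M := fun s => (hM _ (hp1 s)).1
  have hgsb : ∀ s, ‖gradPath ξ pstar s‖ ≤ M := fun s => (hM _ (hps1 s)).1
  have hqt : q + t • gradPath ξ pstar ∈ Q2 D := mem_Q2_add_smul hq hgsQ hgsb ht
  have hqt' : q + t • gradPath ξ p ∈ Q2 D := mem_Q2_add_smul hq hgQ hgb ht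
  have hkey := (hψ _ hqt).2 _ hqt'
  rw [← hfix] at hkey
  -- sup-norm facts
  have hbdd : BddAbove (Set.range fun s => ‖(p - pstar) s‖) := by
    refine ⟨2, ?_⟩; rintro x ⟨s, rfl⟩
    show ‖p s - pstar s‖ ≤ 2
    calc ‖p s - pstar s‖ ≤ ‖p s‖ + ‖pstar s‖ := norm_sub_le _ _
      _ ≤ 2 := by linarith [hp1 s, hps1 s]
  have hSs : ∀ s, ‖p s - pstar s‖ ≤ supN (p - pstar) := fun s =>
    le_csSup hbdd ⟨s, rfl⟩
  set S := supN (p - pstar) with hSdef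
  have hS0 : 0 ≤ S := le_trans (norm_nonneg _) (hSs ⟨0, by norm_num⟩)
  -- pointwise difference of the two shifted paths
  have hdiff : ∀ s : UI, ((q + t • gradPath ξ p) - (q + t • gradPath ξ pstar)) s
      = t • (gradPath ξ p s - gradPath ξ pstar s) := fun s => by
    show (q s + t • gradPath ξ p s) - (q s + t • gradPath ξ pstar s) = _
    module
  have hgdiff : ∀ s, ‖gradPath ξ p s - gradPath ξ pstar s‖ ≤ L * S := fun s => by
    have h1 := hL (p s) (pstar s) (hp1 s) (hps1 s)
    have h2 := hSs s
    calc ‖gradPath ξ p s - gradPath ξ pstar s‖ ≤ L * ‖p s - pstar s‖ := h1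
      _ ≤ L * S := by nlinarith [norm_nonneg (p s - pstar s)]
  have hmΔ : Measurable ((q + t • gradPath ξ p) - (q + t • gradPath ξ pstar)) :=
    hqt'.1.measurable.sub hqt.1.measurable
  -- bound on the L²-norm term
  have hL2N : L2N ((q + t • gradPath ξ p) - (q + t • gradPath ξ pstar)) ^ 2
      ≤ t ^ 2 * L ^ 2 * S ^ 2 := by
    rw [L2N, Real.sq_sqrt (integral_nonneg fun s => sq_nonneg _)]
    have hptw : ∀ s : UI, ‖((q + t • gradPath ξ p) - (q + t • gradPath ξ pstar)) s‖ ^ 2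
        ≤ t ^ 2 * L ^ 2 * S ^ 2 := by
      intro s
      rw [hdiff s, norm_smul, Real.norm_eq_abs, abs_of_nonneg ht]
      have h1 := hgdiff s
      have h2 : t * ‖gradPath ξ p s - gradPath ξ pstar s‖ ≤ t * (L * S) :=
        mul_le_mul_of_nonneg_left h1 ht
      have h3 : (0:ℝ) ≤ t * ‖gradPath ξ p s - gradPath ξ pstar s‖ :=
        mul_nonneg ht (norm_nonneg _)
      nlinarith
    have hint : Integrable fun s =>
        ‖((q + t • gradPath ξ p) - (q + t • gradPath ξ pstar)) s‖ ^ 2 := by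
      apply integrable_of_bound ((hmΔ.norm.pow_const 2).aestronglyMeasurable)
        (c := t ^ 2 * L ^ 2 * S ^ 2)
      intro s
      rw [abs_of_nonneg (sq_nonneg _)]
      exact hptw s
    exact integral_le_of_bound hint hptw
  -- theta facts
  have hθ_cont : Continuous (theta ξ) := by
    unfold theta
    exact (continuous_id.inner (gradient_contDiff hξ).continuous).sub hξ.continuous
  have hθb : ∀ a : Mat D, ‖a‖ ≤ 1 → |theta ξ a| ≤ M + M := by
    intro a ha
    have h1 := (hM a ha).1
    have h2 := (hM a ha).2
    have h3 : |⟪a, gradient ξ a⟫| ≤ ‖a‖ * ‖gradient ξ a‖ := abs_real_inner_le_norm a _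
    have h4 : |theta ξ a| ≤ |⟪a, gradient ξ a⟫| + |ξ a| := abs_sub _ _
    have h5 : (0:ℝ) ≤ ‖gradient ξ a‖ := norm_nonneg _
    have h6 : (0:ℝ) ≤ ‖a‖ := norm_nonneg _
    unfold theta at h4 ⊢
    nlinarith
  have hθp_int : Integrable fun s => theta ξ (p s) :=
    integrable_of_bound ((hθ_cont.measurable.comp hpm).aestronglyMeasurable)
      (fun s => hθb _ (hp1 s))
  have hθps_int : Integrable fun s => theta ξ (pstar s) :=
    integrable_of_bound ((hθ_cont.measurable.comp hpsm).aestronglyMeasurable)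
      (fun s => hθb _ (hps1 s))
  have hinner_int : Integrable fun s =>
      ⟪((q + t • gradPath ξ p) - (q + t • gradPath ξ pstar)) s, pstar s⟫ := by
    apply integrable_of_bound ((hmΔ.inner hpsm).aestronglyMeasurable) (c := t * (M + M))
    intro s
    have h1 : |⟪((q + t • gradPath ξ p) - (q + t • gradPath ξ pstar)) s, pstar s⟫|
        ≤ ‖((q + t • gradPath ξ p) - (q + t • gradPath ξ pstar)) s‖ * ‖pstar s‖ :=
      abs_real_inner_le_norm _ _
    have h2 : ‖((q + t • gradPath ξ p) - (q + t • gradPath ξ pstar)) s‖ ≤ t * (M + M) := by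
      rw [hdiff s, norm_smul, Real.norm_eq_abs, abs_of_nonneg ht]
      have h3 : ‖gradPath ξ p s - gradPath ξ pstar s‖ ≤ M + M := by
        calc ‖gradPath ξ p s - gradPath ξ pstar s‖
            ≤ ‖gradPath ξ p s‖ + ‖gradPath ξ pstar s‖ := norm_sub_le _ _
          _ ≤ M + M := by linarith [hgb s, hgsb s]
      nlinarith [norm_nonneg (gradPath ξ p s - gradPath ξ pstar s)]
    have h4 := hps1 s
    have h5 : (0:ℝ) ≤ ‖((q + t • gradPath ξ p) - (q + t • gradPath ξ pstar)) s‖ :=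
      norm_nonneg _
    nlinarith [norm_nonneg (pstar s)]
  -- the error function E
  set E : UI → ℝ := fun s =>
    ⟪((q + t • gradPath ξ p) - (q + t • gradPath ξ pstar)) s, pstar s⟫
      - t * (theta ξ (p s) - theta ξ (pstar s)) with hE
  have hsplit : scrP ξ ψ t q p - scrP ξ ψ t q pstar =
      (ψ (q + t • gradPath ξ p) - ψ (q + t • gradPath ξ pstar)
        - L2I ((q + t • gradPath ξ p) - (q + t • gradPath ξ pstar)) pstar) + ∫ s, E s := by
    have htsub : Integrable fun s => t * (theta ξ (p s) - theta ξ (pstar s)) :=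
      Integrable.const_mul (hθp_int.sub hθps_int) t
    have hIE : ∫ s, E s = (∫ s, ⟪((q + t • gradPath ξ p) - (q + t • gradPath ξ pstar)) s,
        pstar s⟫) - ∫ s, t * (theta ξ (p s) - theta ξ (pstar s)) :=
      integral_sub hinner_int htsub
    have hIE2 : ∫ s, t * (theta ξ (p s) - theta ξ (pstar s))
        = t * ((∫ s, theta ξ (p s)) - ∫ s, theta ξ (pstar s)) := by
      rw [integral_const_mul, integral_sub hθp_int hθps_int]
    rw [scrP, scrP, hIE, hIE2]
    simp only [L2I]
    ring
  -- pointwise bound on E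
  have hEb : ∀ s, |E s| ≤ 2 * t * L * S ^ 2 := by
    intro s
    have hident : E s = t * (⟪gradPath ξ p s - gradPath ξ pstar s, pstar s - p s⟫
        + (ξ (p s) - ξ (pstar s) - ⟪gradient ξ (pstar s), p s - pstar s⟫)) := by
      show ⟪((q + t • gradPath ξ p) - (q + t • gradPath ξ pstar)) s, pstar s⟫
          - t * (theta ξ (p s) - theta ξ (pstar s)) = _
      rw [hdiff s]
      simp only [theta, gradPath, inner_sub_left, inner_sub_right, real_inner_smul_left]
      rw [real_inner_comm (pstar s) (gradient ξ (pstar s)),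
        real_inner_comm (p s) (gradient ξ (p s))]
      ring
    have h1 : |⟪gradPath ξ p s - gradPath ξ pstar s, pstar s - p s⟫| ≤ (L * S) * S := by
      have ha := abs_real_inner_le_norm (gradPath ξ p s - gradPath ξ pstar s) (pstar s - p s)
      have hb : ‖pstar s - p s‖ ≤ S := by rw [norm_sub_rev]; exact hSs s
      have hc := hgdiff s
      calc |⟪gradPath ξ p s - gradPath ξ pstar s, pstar s - p s⟫|
          ≤ ‖gradPath ξ p s - gradPath ξ pstar s‖ * ‖pstar s - p s‖ := ha
        _ ≤ (L * S) * S := mul_le_mul hc hb (norm_nonneg _) (mul_nonneg hL0 hS0)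
    have h2 : |ξ (p s) - ξ (pstar s) - ⟪gradient ξ (pstar s), p s - pstar s⟫|
        ≤ L * S ^ 2 := by
      have htay := taylor_bound hξ hL0 hL (hps1 s) (hp1 s)
      have hd := hSs s
      calc |ξ (p s) - ξ (pstar s) - ⟪gradient ξ (pstar s), p s - pstar s⟫|
          ≤ L * ‖p s - pstar s‖ ^ 2 := htay
        _ ≤ L * S ^ 2 := mul_le_mul_of_nonneg_left
            (pow_le_pow_left₀ (norm_nonneg _) hd 2) hL0
    rw [hident, abs_mul, abs_of_nonneg ht]
    have h3 := abs_add_le (⟪gradPath ξ p s - gradPath ξ pstar s, pstar s - p s⟫)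
      (ξ (p s) - ξ (pstar s) - ⟪gradient ξ (pstar s), p s - pstar s⟫)
    have h5 : (L * S) * S = L * S ^ 2 := by ring
    have h4 : |⟪gradPath ξ p s - gradPath ξ pstar s, pstar s - p s⟫
        + (ξ (p s) - ξ (pstar s) - ⟪gradient ξ (pstar s), p s - pstar s⟫)|
        ≤ 2 * L * S ^ 2 := by linarith
    calc t * |⟪gradPath ξ p s - gradPath ξ pstar s, pstar s - p s⟫
        + (ξ (p s) - ξ (pstar s) - ⟪gradient ξ (pstar s), p s - pstar s⟫)|
        ≤ t * (2 * L * S ^ 2) := mul_le_mul_of_nonneg_left h4 ht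
      _ = 2 * t * L * S ^ 2 := by ring
  have hEint : Integrable E := by
    apply integrable_of_bound ?_ hEb
    exact ((hmΔ.inner hpsm).sub (measurable_const.mul
      ((hθ_cont.measurable.comp hpm).sub (hθ_cont.measurable.comp hpsm)))).aestronglyMeasurable
  have hIE : |∫ s, E s| ≤ 2 * t * L * S ^ 2 := by
    calc |∫ s, E s| = ‖∫ s, E s‖ := (Real.norm_eq_abs _).symm
      _ ≤ ∫ s, ‖E s‖ := norm_integral_le_integral_norm E
      _ = ∫ s, |E s| := by simp [Real.norm_eq_abs]
      _ ≤ 2 * t * L * S ^ 2 := integral_le_of_bound hEint.abs hEb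
  rw [hsplit]
  calc |(ψ (q + t • gradPath ξ p) - ψ (q + t • gradPath ξ pstar)
        - L2I ((q + t • gradPath ξ p) - (q + t • gradPath ξ pstar)) pstar) + ∫ s, E s|
      ≤ |ψ (q + t • gradPath ξ p) - ψ (q + t • gradPath ξ pstar)
        - L2I ((q + t • gradPath ξ p) - (q + t • gradPath ξ pstar)) pstar| + |∫ s, E s| :=
        abs_add_le _ _
    _ ≤ 8 * L2N ((q + t • gradPath ξ p) - (q + t • gradPath ξ pstar)) ^ 2
        + 2 * t * L * S ^ 2 := add_le_add hkey hIE
    _ ≤ 8 * (t ^ 2 * L ^ 2 * S ^ 2) + 2 * t * L * S ^ 2 := by linarith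
    _ ≤ (8 * t ^ 2 * L ^ 2 + 2 * t * L + 1) * S ^ 2 := by nlinarith [sq_nonneg S]
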